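/- Fix an integer P ≥ 2 and real numbers N_0, N_1, …, N_P with N_0 = 0 and N_P = 0, let R : [0, P] → ℝ be the rank function with Fourier sine coefficients a_k, and set F_j = 2N_j − N_{j+1} − N_{j−1} for j = 1, …, P−1. Then the holographic central charge satisfies (π/8) Σ_{k=1}^∞ k a_k² = (P²/(16π³)) Σ_{j=1}^{P−1} Σ_{l=1}^{P−1} F_j F_l Σ_{k=1}^∞ [cos(kπ(j−l)/P) − cos(kπ(j+l)/P)]/k³, with all series absolutely convergent. -/

import Mathlib

/-!
On each unit interval `R` is affine, so integrating `R η * sin (c * η)` by parts twice gives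
boundary terms in `cos`, which telescope away because `N 0 = N P = 0`, and terms in `sin` whose
coefficients are the slopes of `R`. A discrete summation by parts turns the slopes into the
kinks `F j`: `∫₀^P R η sin (c η) dη = c⁻² ∑ⱼ F j sin (c j)` as soon as `sin (c P) = 0`. Hence
`a k = P / (k π)² ∑ⱼ F j sin (k π j / P)`; squaring and using `2 sin x sin y = cos (x - y) - cos (x + y)`
writes `k a k ^ 2` as a finite combination of the terms `(cos - cos) / k ^ 3`, each dominated by
`2 / k ^ 3`, so the series may be summed term by term.
-/

open MeasureTheory Finset Real

theorem integral_affine_mul_sin (A B x₀ c : ℝ) (hc : c ≠ 0) :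
    ∫ η in x₀..x₀ + 1, (A + B * (η - x₀)) * sin (c * η)
      = (A * cos (c * x₀) - (A + B) * cos (c * (x₀ + 1))) / c
        + B * (sin (c * (x₀ + 1)) - sin (c * x₀)) / c ^ 2 := by
  have hderiv : ∀ η : ℝ, HasDerivAt
      (fun η => -((A + B * (η - x₀)) * cos (c * η)) / c + B * sin (c * η) / c ^ 2)
      ((A + B * (η - x₀)) * sin (c * η)) η := by
    intro η
    have haff : HasDerivAt (fun η : ℝ => A + B * (η - x₀)) B η := by
      simpa using (((hasDerivAt_id η).sub_const x₀).const_mul B).const_add A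
    have hlin : HasDerivAt (fun η : ℝ => c * η) c η := by
      simpa using (hasDerivAt_id η).const_mul c
    have hcos : HasDerivAt (fun η => cos (c * η)) (-sin (c * η) * c) η :=
      (hasDerivAt_cos (c * η)).comp η hlin
    have hsin : HasDerivAt (fun η => sin (c * η)) (cos (c * η) * c) η :=
      (hasDerivAt_sin (c * η)).comp η hlin
    refine (((haff.mul hcos).neg.div_const c).add
      ((hsin.const_mul B).div_const (c ^ 2))).congr_deriv ?_
    field_simp
    ring
  rw [intervalIntegral.integral_eq_sub_of_hasDerivAt (fun η _ => hderiv η)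
    (Continuous.intervalIntegrable (by fun_prop) _ _)]
  field_simp
  ring

theorem sum_range_sub_mul_sub (u v : ℕ → ℝ) {n : ℕ} (hn : 1 ≤ n) :
    ∑ l ∈ range n, (u (l + 1) - u l) * (v (l + 1) - v l)
      = ∑ j ∈ Icc 1 (n - 1), (2 * u j - u (j + 1) - u (j - 1)) * v j
        + (u n - u (n - 1)) * v n - (u 1 - u 0) * v 0 := by
  induction n, hn using Nat.le_induction with
  | base => rw [range_one, sum_singleton, Nat.sub_self, Icc_eq_empty (by omega), sum_empty]; ring
  | succ n hn ih =>
    obtain ⟨m, rfl⟩ : ∃ m, n = m + 1 := ⟨n - 1, by omega⟩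
    simp only [sum_range_succ, ih, Nat.add_sub_cancel]
    rw [sum_Icc_succ_top (by omega), Nat.add_sub_cancel]
    ring

theorem integral_piecewiseLinear_mul_sin {P : ℕ} (hP : 0 < P) {N : ℕ → ℝ} (hN0 : N 0 = 0)
    (hNP : N P = 0) {R : ℝ → ℝ}
    (hR : ∀ l : ℕ, l < P → ∀ η ∈ Set.Icc (l : ℝ) ((l : ℝ) + 1),
      R η = N l + (N (l + 1) - N l) * (η - l))
    {c : ℝ} (hc : c ≠ 0) (hcP : sin (c * P) = 0) :
    ∫ η in (0 : ℝ)..P, R η * sin (c * η)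
      = (∑ j ∈ Icc 1 (P - 1), (2 * N j - N (j + 1) - N (j - 1)) * sin (c * j)) / c ^ 2 := by
  have heqOn : ∀ l < P, Set.EqOn (fun η => R η * sin (c * η))
      (fun η => (N l + (N (l + 1) - N l) * (η - l)) * sin (c * η)) (Set.uIcc (l : ℝ) (l + 1)) := by
    intro l hl η hη
    rw [Set.uIcc_of_le (by linarith)] at hη
    simp only [hR l hl η hη]
  have hpiece : ∀ l ∈ range P, ∫ η in (l : ℝ)..l + 1, R η * sin (c * η)
      = (N l * cos (c * l) - N (l + 1) * cos (c * (l + 1 : ℕ))) / c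
        + (N (l + 1) - N l) * (sin (c * (l + 1 : ℕ)) - sin (c * l)) / c ^ 2 := by
    intro l hl
    rw [intervalIntegral.integral_congr (heqOn l (mem_range.mp hl)), integral_affine_mul_sin _ _ _ _ hc]
    push_cast
    ring_nf
  have hintegrable : ∀ l < P, IntervalIntegrable (fun η => R η * sin (c * η)) volume l (l + 1) :=
    fun l hl => ((Continuous.continuousOn (by fun_prop)).congr (heqOn l hl)).intervalIntegrable
  have hsplit := intervalIntegral.sum_integral_adjacent_intervals (a := fun n : ℕ => (n : ℝ))
    (fun l hl => by push_cast; exact hintegrable l hl)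
  push_cast at hsplit
  rw [← hsplit, sum_congr rfl hpiece, sum_add_distrib, ← sum_div, ← sum_div,
    sum_range_sub' (fun l => N l * cos (c * l)),
    sum_range_sub_mul_sub N (fun l => sin (c * l)) hP]
  simp [hN0, hNP, hcP]

theorem sq_sum_mul_sin {ι : Type*} (s : Finset ι) (w x : ι → ℝ) :
    (∑ i ∈ s, w i * sin (x i)) ^ 2
      = ∑ i ∈ s, ∑ j ∈ s, w i * w j * (cos (x i - x j) - cos (x i + x j)) / 2 := by
  rw [sq, sum_mul_sum]
  refine sum_congr rfl fun i _ => sum_congr rfl fun j _ => ?_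
  rw [← two_mul_sin_mul_sin]
  ring

theorem mul_sq_sum_mul_sin_div_sq {P x : ℝ} (hP : P ≠ 0) (hx : x ≠ 0) (s : Finset ℕ) (F : ℕ → ℝ) :
    x * (1 / P * (∑ j ∈ s, F j * sin (x * π / P * j)) / (x * π / P) ^ 2) ^ 2
      = P ^ 2 / (2 * π ^ 4) * ∑ j ∈ s, ∑ l ∈ s,
          F j * F l * ((cos (x * π * ((j : ℝ) - l) / P) - cos (x * π * ((j : ℝ) + l) / P)) / x ^ 3) := by
  rw [div_pow, mul_pow, sq_sum_mul_sin]
  simp only [mul_sum, sum_div]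
  refine sum_congr rfl fun j _ => sum_congr rfl fun l _ => ?_
  rw [show x * π / P * j - x * π / P * l = x * π * ((j : ℝ) - l) / P by ring,
    show x * π / P * j + x * π / P * l = x * π * ((j : ℝ) + l) / P by ring]
  field_simp

theorem summable_cos_sub_cos_div_cube (f g : ℕ → ℝ) :
    Summable fun k : ℕ => (cos (f k) - cos (g k)) / ((k : ℝ) + 1) ^ 3 := by
  have hcube : Summable fun k : ℕ => 2 / ((k : ℝ) + 1) ^ 3 := by
    have := (summable_nat_add_iff 1).mpr (summable_one_div_nat_pow.mpr (by norm_num : 1 < 3))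
    simpa [div_eq_mul_inv] using this.mul_left 2
  refine Summable.of_norm_bounded hcube fun k => ?_
  rw [norm_div, norm_of_nonneg (by positivity : (0 : ℝ) ≤ ((k : ℝ) + 1) ^ 3)]
  gcongr
  calc ‖cos (f k) - cos (g k)‖ ≤ |cos (f k)| + |cos (g k)| := norm_sub_le _ _
    _ ≤ 1 + 1 := add_le_add (abs_cos_le_one _) (abs_cos_le_one _)
    _ = 2 := by norm_num

/-- The holographic central charge of a balanced linear quiver:
`(π/8) Σ_k k a_k² = (P²/(16π³)) Σ_{j,l=1}^{P−1} F_j F_l Σ_k (cos(kπ(j−l)/P) − cos(kπ(j+l)/P))/k³`,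
with all series absolutely convergent. -/
theorem stmt7 (P : ℕ) (hP : 2 ≤ P) (N : ℕ → ℝ) (hN0 : N 0 = 0) (hNP : N P = 0)
    (R : ℝ → ℝ)
    (hR : ∀ l : ℕ, l < P → ∀ η ∈ Set.Icc (l : ℝ) ((l : ℝ) + 1),
      R η = N l + (N (l + 1) - N l) * (η - l))
    (a : ℕ → ℝ)
    (ha : ∀ k : ℕ, a k = (1 / (P : ℝ)) *
      ∫ η in (0 : ℝ)..(P : ℝ), R η * Real.sin ((k : ℝ) * Real.pi * η / P))
    (F : ℕ → ℝ) (hF : ∀ j : ℕ, 1 ≤ j → j ≤ P - 1 → F j = 2 * N j - N (j + 1) - N (j - 1)) :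
    Summable (fun k : ℕ => ((k : ℝ) + 1) * a (k + 1) ^ 2) ∧
    (∀ j l : ℕ, Summable (fun k : ℕ =>
      (Real.cos (((k : ℝ) + 1) * Real.pi * ((j : ℝ) - (l : ℝ)) / P) -
        Real.cos (((k : ℝ) + 1) * Real.pi * ((j : ℝ) + (l : ℝ)) / P)) / ((k : ℝ) + 1) ^ 3)) ∧
    (Real.pi / 8) * ∑' k : ℕ, ((k : ℝ) + 1) * a (k + 1) ^ 2
      = ((P : ℝ) ^ 2 / (16 * Real.pi ^ 3)) *
        ∑ j ∈ Finset.Icc 1 (P - 1), ∑ l ∈ Finset.Icc 1 (P - 1),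
          F j * F l * ∑' k : ℕ,
            (Real.cos (((k : ℝ) + 1) * Real.pi * ((j : ℝ) - (l : ℝ)) / P) -
              Real.cos (((k : ℝ) + 1) * Real.pi * ((j : ℝ) + (l : ℝ)) / P)) /
              ((k : ℝ) + 1) ^ 3 := by
  have hPpos : (0 : ℝ) < P := by exact_mod_cast (by omega : 0 < P)
  set T : ℕ → ℕ → ℕ → ℝ := fun j l k =>
    (cos (((k : ℝ) + 1) * π * ((j : ℝ) - l) / P) - cos (((k : ℝ) + 1) * π * ((j : ℝ) + l) / P)) /
      ((k : ℝ) + 1) ^ 3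
  have hT_summable : ∀ j l, Summable (T j l) := fun j l => summable_cos_sub_cos_div_cube _ _
  have hterm : ∀ k : ℕ, ((k : ℝ) + 1) * a (k + 1) ^ 2
      = P ^ 2 / (2 * π ^ 4) * ∑ j ∈ Icc 1 (P - 1), ∑ l ∈ Icc 1 (P - 1), F j * F l * T j l k := by
    intro k
    set c := ((k : ℝ) + 1) * π / P with hc
    have hcP : sin (c * P) = 0 := by
      rw [hc, div_mul_cancel₀ _ hPpos.ne']
      exact_mod_cast sin_nat_mul_pi (k + 1)
    have harg : ∀ η : ℝ, ((k + 1 : ℕ) : ℝ) * π * η / P = c * η := fun η => by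
      rw [hc]; push_cast; ring
    have hcoef : a (k + 1) = 1 / P * (∑ j ∈ Icc 1 (P - 1), F j * sin (c * j)) / c ^ 2 := by
      simp only [ha, harg]
      rw [integral_piecewiseLinear_mul_sin (by omega) hN0 hNP hR (by positivity) hcP, mul_div_assoc,
        sum_congr rfl fun j hj => by rw [← hF j (mem_Icc.mp hj).1 (mem_Icc.mp hj).2]]
    rw [hcoef, hc, mul_sq_sum_mul_sin_div_sq hPpos.ne' (by positivity)]
  have hHasSum : HasSum (fun k : ℕ => ((k : ℝ) + 1) * a (k + 1) ^ 2)
      (P ^ 2 / (2 * π ^ 4) * ∑ j ∈ Icc 1 (P - 1), ∑ l ∈ Icc 1 (P - 1), F j * F l * ∑' k, T j l k) := by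
    simpa only [hterm] using (hasSum_sum fun j _ => hasSum_sum fun l _ =>
      (hT_summable j l).hasSum.mul_left (F j * F l)).mul_left (P ^ 2 / (2 * π ^ 4) : ℝ)
  refine ⟨hHasSum.summable, hT_summable, ?_⟩
  rw [hHasSum.tsum_eq, ← mul_assoc]
  congr 1
  field_simp
  ring
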